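/- Let D ⊂ ℝ^d be a bounded measurable set, let G satisfy the Gaussian property with constants c₁, c₂, let f : ℝ → ℝ satisfy |f(u)| ≤ L(1+|u|), and let u be measurable with u(·,z) ∈ L²(D) for each z. Then for all 0 ≤ v < s ≤ T, ‖ ∫_v^s ∫_D G(·,s;y,z) f(u(y,z)) dy dz ‖₂ ≤ C (s−v)^{1/2} ( ∫_v^s (1 + ‖u(·,z)‖₂²) dz )^{1/2}, where C depends only on c₁, c₂, d, L and the Lebesgue measure of D. -/

import Mathlib

open MeasureTheory Real Set
open scoped ENNReal NNReal

noncomputable section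

/-- Euclidean space `ℝ^d`. -/
abbrev Euc (d : ℕ) : Type := EuclideanSpace ℝ (Fin d)

/-- The Gaussian heat-kernel bound `r^{-d/2} exp(-c₂ |x-y|² / r)`. -/
def gaussKer (d : ℕ) (c₂ r : ℝ) (x y : Euc d) : ℝ :=
  r ^ (-(d : ℝ) / 2) * Real.exp (-c₂ * ‖x - y‖ ^ 2 / r)

/-- `G` satisfies the Gaussian property with constants `c₁, c₂` on `D × [0,T]`. -/
def GaussianProperty {d : ℕ} (D : Set (Euc d)) (T c₁ c₂ : ℝ)
    (G : Euc d → ℝ → Euc d → ℝ → ℝ) : Prop :=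
  ∀ x ∈ D, ∀ y ∈ D, ∀ s t : ℝ, 0 ≤ s → s < t → t ≤ T →
    |G x t y s| ≤ c₁ * gaussKer d c₂ (t - s) x y

/-- Second-variable difference estimate with exponent `δ`. -/
def SecondVarDiff {d : ℕ} (D : Set (Euc d)) (T c₂ δ : ℝ)
    (G : Euc d → ℝ → Euc d → ℝ → ℝ) : Prop :=
  ∀ x ∈ D, ∀ y ∈ D, ∀ r v t : ℝ, 0 < r → r < v → v < t → t ≤ T →
    ∃ ts ∈ Ioo r v,
      |G x t y v - G x t y r| ≤ (t - v) ^ (-δ) * (v - r) ^ δ * gaussKer d c₂ (t - ts) x y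

/-- First-variable difference estimate with exponent `δ`. -/
def FirstVarDiff {d : ℕ} (D : Set (Euc d)) (T c₂ δ : ℝ)
    (G : Euc d → ℝ → Euc d → ℝ → ℝ) : Prop :=
  ∀ x ∈ D, ∀ y ∈ D, ∀ v s t : ℝ, 0 ≤ v → v < s → s < t → t ≤ T →
    ∃ vs ∈ Ioo s t,
      |G x t y v - G x s y v| ≤ (t - s) ^ δ * (s - v) ^ (-δ) * gaussKer d c₂ (vs - v) x y

/-- Mixed second-difference estimate with exponent `δ`. -/
def MixedDiff {d : ℕ} (D : Set (Euc d)) (T c₂ δ : ℝ)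
    (G : Euc d → ℝ → Euc d → ℝ → ℝ) : Prop :=
  ∀ x ∈ D, ∀ y ∈ D, ∀ r v s t : ℝ, 0 < r → r < v → v < s → s < t → t ≤ T →
    ∃ vs ∈ Ioo s t, ∃ rs ∈ Ioo s t,
      |G x t y v - G x s y v - G x t y r + G x s y r| ≤
        (t - s) ^ δ * (s - v)⁻¹ * (v - r) ^ (1 - δ) *
          (gaussKer d c₂ (vs - v) x y + gaussKer d c₂ (rs - r) x y)

/-- The `L²(D)` norm (with values in `[0,∞]`). -/
def L2N {d : ℕ} (D : Set (Euc d)) (f : Euc d → ℝ) : ℝ≥0∞ :=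
  eLpNorm f 2 (volume.restrict D)

/-- The Hölder-type seminorm `‖f‖_{α,0;t}` (with values in `[0,∞]`). -/
def hsem (α t : ℝ) (f : ℝ → ℝ) : ℝ≥0∞ :=
  ⨆ (u : ℝ) (v : ℝ) (_ : 0 ≤ u) (_ : u < v) (_ : v < t),
    (ENNReal.ofReal (|f v - f u| / (v - u) ^ (1 - α)) +
      ∫⁻ z in Ioo u v, ENNReal.ofReal (|f u - f z| / (z - u) ^ (2 - α)))

/-- The Riemann–Liouville left-sided fractional derivative `D^α_{a+} F`. -/
def RLplus (α a : ℝ) (F : ℝ → ℝ) (s : ℝ) : ℝ :=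
  (Real.Gamma (1 - α))⁻¹ *
    (F s / (s - a) ^ α + α * ∫ v in Ioo a s, (F s - F v) / (s - v) ^ (α + 1))

/-- The Riemann–Liouville right-sided fractional derivative `D^{1-α}_{b-} g_{b-}`
(of the function `g_{b-}(x) = g(b) - g(x)`). -/
def RLminus (α b : ℝ) (g : ℝ → ℝ) (s : ℝ) : ℝ :=
  (Real.Gamma α)⁻¹ *
    ((g b - g s) / (b - s) ^ (1 - α) +
      (1 - α) * ∫ y in Ioo s b, (g y - g s) / (y - s) ^ (2 - α))

/-- The (pointwise, real-valued) generalized Lebesgue–Stieltjes integral `∫_a^b F dg`. -/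
def glsIntegral (α a b : ℝ) (F g : ℝ → ℝ) : ℝ :=
  ∫ s in Ioc a b, RLplus α a F s * RLminus α b g s

/-- The square of the norm `‖u‖_{α,2,t}` of `𝓑^{α,2}(0,t;L²(D))` (with values in `[0,∞]`). -/
def wnormSq {d : ℕ} (D : Set (Euc d)) (α t : ℝ) (u : ℝ → Euc d → ℝ) : ℝ≥0∞ :=
  (⨆ s ∈ Icc (0 : ℝ) t, L2N D (u s)) ^ 2 +
    ∫⁻ s in Ioc (0 : ℝ) t,
      (∫⁻ v in Ioo (0 : ℝ) s, L2N D (u s - u v) * ENNReal.ofReal ((s - v) ^ (-α - 1))) ^ 2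

/-- The kernel `a_{j,t}(u)(x,s) = ∫_D G(x,t;y,s) h(u(y,s)) e(y) dy` with `h(z) = p z + q`. -/
def aKer {d : ℕ} (D : Set (Euc d)) (G : Euc d → ℝ → Euc d → ℝ → ℝ) (p q : ℝ)
    (u : ℝ → Euc d → ℝ) (e : Euc d → ℝ) (t : ℝ) (x : Euc d) (s : ℝ) : ℝ :=
  ∫ y in D, G x t y s * (p * u s y + q) * e y

/-- `I_h(x,t) = Σ_j μ_j^{1/2} ∫_0^t a_{j,t}(u)(x,s) dZ_j(s)` (pointwise in `x`). -/
def Ihat {d : ℕ} (D : Set (Euc d)) (G : Euc d → ℝ → Euc d → ℝ → ℝ) (p q : ℝ)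
    (u : ℝ → Euc d → ℝ) (e : ℕ → Euc d → ℝ) (μ : ℕ → ℝ) (Z : ℕ → ℝ → ℝ)
    (α t : ℝ) (x : Euc d) : ℝ :=
  ∑' j, Real.sqrt (μ j) * glsIntegral α 0 t (fun s => aKer D G p q u (e j) t x s) (Z j)

end

/-! For `x ∈ D` the integrand is dominated by `K x (z, y) * W (z, y)`, where
`K x (z, y) = c₁ g(s - z, x, y)` is the Gaussian majorant and `W = L (1 + |u|)`. A Gaussian in
one space variable has mass at most `(π / c₂) ^ (d / 2)`, so `K` has row integrals
`≤ c₁ (π / c₂) ^ (d / 2) (s - v)` over `(v, s) × D` and column integrals `≤ c₁ (π / c₂) ^ (d / 2)`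
over `D`. Schur's test (Cauchy–Schwarz against the measure `K x (z, y) dz dy`, then Tonelli) bounds
the squared `L²(D)` norm by the product of these two bounds times
`∫∫ W² ≤ 2 L² (|D| + 1) ∫ (1 + ‖u z‖²) dz`, which is the claim after taking square roots. -/

lemma eLpNorm_two_sq {α E : Type*} [MeasurableSpace α] [NormedAddCommGroup E] (μ : Measure α)
    (f : α → E) : eLpNorm f 2 μ ^ 2 = ∫⁻ x, ‖f x‖ₑ ^ 2 ∂μ := by
  simpa using eLpNorm_nnreal_pow_eq_lintegral (f := f) (μ := μ) (p := 2) two_ne_zero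

lemma lintegral_mul_sq_le {α : Type*} [MeasurableSpace α] {μ : Measure α} {f g : α → ℝ≥0∞}
    (hf : AEMeasurable f μ) (hg : AEMeasurable g μ) :
    (∫⁻ a, f a * g a ∂μ) ^ 2 ≤ (∫⁻ a, f a ∂μ) * ∫⁻ a, f a * g a ^ 2 ∂μ := by
  have key := ENNReal.lintegral_mul_norm_pow_le (g := fun a => f a * g a ^ 2) hf
    (hf.mul (hg.pow_const 2)) (p := 1 / 2) (q := 1 / 2) (by norm_num) (by norm_num) (by norm_num)
  have hsqrt : ∀ a, f a ^ (1 / 2 : ℝ) * (f a * g a ^ 2) ^ (1 / 2 : ℝ) = f a * g a := by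
    intro a
    rw [ENNReal.mul_rpow_of_nonneg _ _ (by norm_num), ← mul_assoc,
      ← ENNReal.rpow_add_of_nonneg _ _ (by norm_num) (by norm_num), ← ENNReal.rpow_natCast,
      ← ENNReal.rpow_mul]
    norm_num
  rw [lintegral_congr hsqrt] at key
  calc (∫⁻ a, f a * g a ∂μ) ^ 2
      ≤ ((∫⁻ a, f a ∂μ) ^ (1 / 2 : ℝ) * (∫⁻ a, f a * g a ^ 2 ∂μ) ^ (1 / 2 : ℝ)) ^ 2 := by gcongr
    _ = _ := by
      rw [mul_pow, ← ENNReal.rpow_natCast, ← ENNReal.rpow_natCast (_ ^ _), ← ENNReal.rpow_mul,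
        ← ENNReal.rpow_mul]
      norm_num

theorem eLpNorm_two_sq_le_of_kernel {X P E : Type*} [MeasurableSpace X] [MeasurableSpace P]
    [NormedAddCommGroup E] {μ : Measure X} {ν : Measure P} [SFinite μ] [SFinite ν]
    {F : X → E} {K : X → P → ℝ≥0∞} {W : P → ℝ≥0∞} {A B : ℝ≥0∞}
    (hK : Measurable (Function.uncurry K)) (hW : Measurable W)
    (hF : ∀ᵐ x ∂μ, ‖F x‖ₑ ≤ ∫⁻ p, K x p * W p ∂ν)
    (hrow : ∀ᵐ x ∂μ, ∫⁻ p, K x p ∂ν ≤ A) (hcol : ∀ᵐ p ∂ν, ∫⁻ x, K x p ∂μ ≤ B) :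
    eLpNorm F 2 μ ^ 2 ≤ A * B * ∫⁻ p, W p ^ 2 ∂ν := by
  have hKW : Measurable (Function.uncurry fun x p => K x p * W p ^ 2) :=
    hK.mul ((hW.comp measurable_snd).pow_const 2)
  calc eLpNorm F 2 μ ^ 2 = ∫⁻ x, ‖F x‖ₑ ^ 2 ∂μ := eLpNorm_two_sq μ F
    _ ≤ ∫⁻ x, A * ∫⁻ p, K x p * W p ^ 2 ∂ν ∂μ := by
      refine lintegral_mono_ae ((hF.and hrow).mono fun x ⟨hFx, hAx⟩ => ?_)
      calc ‖F x‖ₑ ^ 2 ≤ (∫⁻ p, K x p * W p ∂ν) ^ 2 := by gcongr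
        _ ≤ (∫⁻ p, K x p ∂ν) * ∫⁻ p, K x p * W p ^ 2 ∂ν :=
          lintegral_mul_sq_le (hK.comp measurable_prodMk_left).aemeasurable hW.aemeasurable
        _ ≤ A * ∫⁻ p, K x p * W p ^ 2 ∂ν := by gcongr
    _ = A * ∫⁻ p, (∫⁻ x, K x p ∂μ) * W p ^ 2 ∂ν := by
      have hKWx : Measurable fun x => ∫⁻ p, K x p * W p ^ 2 ∂ν := hKW.lintegral_prod_right'
      rw [lintegral_const_mul _ hKWx, lintegral_lintegral_swap hKW.aemeasurable]
      exact congrArg (A * ·) <| lintegral_congr fun p =>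
        lintegral_mul_const _ (hK.comp measurable_prodMk_right)
    _ ≤ A * ∫⁻ p, B * W p ^ 2 ∂ν := by
      gcongr A * ?_
      exact lintegral_mono_ae (hcol.mono fun p hp => by gcongr)
    _ = A * B * ∫⁻ p, W p ^ 2 ∂ν := by rw [lintegral_const_mul _ (hW.pow_const 2), mul_assoc]

lemma lintegral_ofReal_linearGrowth_sq_le {α : Type*} [MeasurableSpace α] (μ : Measure α)
    {L : ℝ} (hL : 0 ≤ L) (g : α → ℝ) :
    ∫⁻ a, ENNReal.ofReal (L * (1 + |g a|)) ^ 2 ∂μ ≤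
      ENNReal.ofReal (2 * L ^ 2) * (μ univ + eLpNorm g 2 μ ^ 2) := by
  have hpt : ∀ a, ENNReal.ofReal (L * (1 + |g a|)) ^ 2 ≤
      ENNReal.ofReal (2 * L ^ 2) * (1 + ‖g a‖ₑ ^ 2) := by
    intro a
    rw [Real.enorm_eq_ofReal_abs, ← ENNReal.ofReal_pow (by positivity),
      ← ENNReal.ofReal_pow (abs_nonneg _), ← ENNReal.ofReal_one, ← ENNReal.ofReal_add zero_le_one
      (by positivity), ← ENNReal.ofReal_mul (by positivity)]
    refine ENNReal.ofReal_le_ofReal ?_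
    nlinarith [sq_nonneg (1 - |g a|), sq_nonneg L]
  calc ∫⁻ a, ENNReal.ofReal (L * (1 + |g a|)) ^ 2 ∂μ
      ≤ ∫⁻ a, ENNReal.ofReal (2 * L ^ 2) * (1 + ‖g a‖ₑ ^ 2) ∂μ := lintegral_mono hpt
    _ = _ := by
      rw [lintegral_const_mul' _ _ ENNReal.ofReal_ne_top, lintegral_add_left measurable_const,
        lintegral_const, one_mul, eLpNorm_two_sq]

lemma ENNReal.le_mul_rpow_half_of_sq_le {a b c : ℝ≥0∞} (h : a ^ 2 ≤ b ^ 2 * c) :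
    a ≤ b * c ^ (1 / 2 : ℝ) := by
  have hsqrt : ∀ x : ℝ≥0∞, (x ^ 2) ^ (1 / 2 : ℝ) = x := fun x => by
    rw [← ENNReal.rpow_natCast, ← ENNReal.rpow_mul]; norm_num
  calc a = (a ^ 2) ^ (1 / 2 : ℝ) := (hsqrt a).symm
    _ ≤ (b ^ 2 * c) ^ (1 / 2 : ℝ) := by gcongr
    _ = b * c ^ (1 / 2 : ℝ) := by rw [ENNReal.mul_rpow_of_nonneg _ _ (by norm_num), hsqrt]

section GaussianKernel

variable {d : ℕ} {c₂ r : ℝ}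

lemma gaussKer_nonneg (hr : 0 ≤ r) (x y : Euc d) : 0 ≤ gaussKer d c₂ r x y := by
  unfold gaussKer; positivity

lemma gaussKer_comm (c₂ r : ℝ) (x y : Euc d) : gaussKer d c₂ r x y = gaussKer d c₂ r y x := by
  rw [gaussKer, gaussKer, norm_sub_rev]

lemma integral_gaussKer (hc₂ : 0 < c₂) (hr : 0 < r) (x : Euc d) :
    ∫ y, gaussKer d c₂ r x y = (π / c₂) ^ ((d : ℝ) / 2) := by
  have hker : ∀ y,
      gaussKer d c₂ r x y = r ^ (-(d : ℝ) / 2) * rexp (-(c₂ / r) * ‖y - x‖ ^ 2) := by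
    intro y
    rw [gaussKer, norm_sub_rev]
    congr 2
    ring
  simp_rw [hker]
  rw [integral_const_mul,
    integral_sub_right_eq_self (fun y : Euc d => rexp (-(c₂ / r) * ‖y‖ ^ 2)),
    GaussianFourier.integral_rexp_neg_mul_sq_norm (div_pos hc₂ hr), finrank_euclideanSpace_fin,
    div_div_eq_mul_div, mul_div_right_comm, Real.mul_rpow (by positivity) hr.le, ← mul_assoc,
    mul_comm (r ^ _), mul_assoc, ← Real.rpow_add hr, neg_div, neg_add_cancel, Real.rpow_zero,
    mul_one]

lemma setLIntegral_gaussKer_le (D : Set (Euc d)) (hc₂ : 0 < c₂) (hr : 0 < r) (x : Euc d) :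
    ∫⁻ y in D, ENNReal.ofReal (gaussKer d c₂ r x y) ≤
      ENNReal.ofReal ((π / c₂) ^ ((d : ℝ) / 2)) := by
  have hint : Integrable (gaussKer d c₂ r x) :=
    .of_integral_ne_zero (by rw [integral_gaussKer hc₂ hr]; positivity)
  calc ∫⁻ y in D, ENNReal.ofReal (gaussKer d c₂ r x y)
      ≤ ∫⁻ y, ENNReal.ofReal (gaussKer d c₂ r x y) := setLIntegral_le_lintegral _ _
    _ = _ := by
      rw [← ofReal_integral_eq_lintegral_ofReal hint
        (.of_forall (gaussKer_nonneg hr.le x)), integral_gaussKer hc₂ hr]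

end GaussianKernel

section GaussMajorant

variable {d : ℕ} {c₁ c₂ s : ℝ}

noncomputable def gaussMajorant (d : ℕ) (c₁ c₂ s : ℝ) (x : Euc d) (p : ℝ × Euc d) : ℝ≥0∞ :=
  ENNReal.ofReal (c₁ * gaussKer d c₂ (s - p.1) x p.2)

lemma measurable_gaussMajorant : Measurable (Function.uncurry (gaussMajorant d c₁ c₂ s)) := by
  unfold gaussMajorant gaussKer
  fun_prop

lemma setLIntegral_gaussMajorant_le (D : Set (Euc d)) (hc₁ : 0 ≤ c₁) (hc₂ : 0 < c₂) {z : ℝ}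
    (hz : z < s) (x : Euc d) :
    ∫⁻ y in D, gaussMajorant d c₁ c₂ s x (z, y) ≤
      ENNReal.ofReal (c₁ * (π / c₂) ^ ((d : ℝ) / 2)) := by
  simp_rw [gaussMajorant, ENNReal.ofReal_mul hc₁]
  rw [lintegral_const_mul' _ _ ENNReal.ofReal_ne_top]
  gcongr
  exact setLIntegral_gaussKer_le D hc₂ (sub_pos.2 hz) x

lemma lintegral_gaussMajorant_le (D : Set (Euc d)) {v : ℝ} (hc₁ : 0 ≤ c₁) (hc₂ : 0 < c₂)
    (x : Euc d) :
    ∫⁻ p, gaussMajorant d c₁ c₂ s x p ∂(volume.restrict (Ioo v s)).prod (volume.restrict D) ≤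
      ENNReal.ofReal (c₁ * (π / c₂) ^ ((d : ℝ) / 2)) * ENNReal.ofReal (s - v) := by
  have hKx : Measurable (gaussMajorant d c₁ c₂ s x) :=
    measurable_gaussMajorant.comp measurable_prodMk_left
  rw [lintegral_prod _ hKx.aemeasurable, ← Real.volume_Ioo, ← setLIntegral_const]
  exact setLIntegral_mono' measurableSet_Ioo fun z hz =>
    setLIntegral_gaussMajorant_le D hc₁ hc₂ hz.2 x

lemma ae_setLIntegral_gaussMajorant_le (D : Set (Euc d)) {v : ℝ} (hc₁ : 0 ≤ c₁) (hc₂ : 0 < c₂) :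
    ∀ᵐ p ∂(volume.restrict (Ioo v s)).prod (volume.restrict D),
      ∫⁻ x in D, gaussMajorant d c₁ c₂ s x p ≤ ENNReal.ofReal (c₁ * (π / c₂) ^ ((d : ℝ) / 2)) := by
  have hlt : ∀ᵐ p ∂(volume.restrict (Ioo v s)).prod (volume.restrict D), p.1 < s :=
    Measure.quasiMeasurePreserving_fst.ae
      ((ae_restrict_mem measurableSet_Ioo).mono fun _ hz => hz.2)
  refine hlt.mono fun p hp => ?_
  simp_rw [gaussMajorant, gaussKer_comm _ _ _ p.2]
  exact setLIntegral_gaussMajorant_le D hc₁ hc₂ hp p.2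

end GaussMajorant

lemma enorm_integral_le_lintegral_gaussMajorant {d : ℕ} {D : Set (Euc d)} (hDm : MeasurableSet D)
    {T c₁ c₂ L : ℝ} {G : Euc d → ℝ → Euc d → ℝ → ℝ} (hG : GaussianProperty D T c₁ c₂ G)
    {f : ℝ → ℝ} (hf : ∀ z, |f z| ≤ L * (1 + |z|)) {u : ℝ → Euc d → ℝ}
    (hu : Measurable (Function.uncurry u)) {v s : ℝ} (hv : 0 ≤ v) (hsT : s ≤ T) {x : Euc d}
    (hx : x ∈ D) :
    ‖∫ z in Ioc v s, ∫ y in D, G x s y z * f (u z y)‖ₑ ≤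
      ∫⁻ p, gaussMajorant d c₁ c₂ s x p * ENNReal.ofReal (L * (1 + |Function.uncurry u p|))
        ∂(volume.restrict (Ioo v s)).prod (volume.restrict D) := by
  have hKx : Measurable (gaussMajorant d c₁ c₂ s x) :=
    measurable_gaussMajorant.comp measurable_prodMk_left
  rw [lintegral_prod (fun p => gaussMajorant d c₁ c₂ s x p * _)
    (hKx.mul (by fun_prop)).aemeasurable, ← restrict_Ioo_eq_restrict_Ioc]
  -- `‖∫ F‖ₑ ≤ ∫⁻ ‖F‖ₑ` holds without integrability (the Bochner integral is then `0`),
  -- so nothing is assumed about the measurability of `G`.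
  refine (enorm_integral_le_lintegral_enorm _).trans
    (setLIntegral_mono' measurableSet_Ioo fun z hz => ?_)
  refine (enorm_integral_le_lintegral_enorm _).trans (setLIntegral_mono' hDm fun y hy => ?_)
  have hGb := hG x hx y hy z s (hv.trans hz.1.le) hz.2 hsT
  have hmaj : 0 ≤ c₁ * gaussKer d c₂ (s - z) x y := (abs_nonneg _).trans hGb
  rw [Real.enorm_eq_ofReal_abs, abs_mul, gaussMajorant, ← ENNReal.ofReal_mul hmaj]
  exact ENNReal.ofReal_le_ofReal (mul_le_mul hGb (hf _) (abs_nonneg _) hmaj)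

lemma lintegral_prod_linearGrowth_sq_le {d : ℕ} {D : Set (Euc d)} (hD : volume D ≠ ∞) (I : Set ℝ)
    {L : ℝ} (hL : 0 ≤ L) {u : ℝ → Euc d → ℝ} (hu : Measurable (Function.uncurry u)) :
    ∫⁻ p, ENNReal.ofReal (L * (1 + |Function.uncurry u p|)) ^ 2
        ∂(volume.restrict I).prod (volume.restrict D) ≤
      ENNReal.ofReal (2 * L ^ 2 * ((volume D).toReal + 1)) * ∫⁻ z in I, (1 + L2N D (u z) ^ 2) := by
  rw [ENNReal.ofReal_mul (by positivity), ENNReal.ofReal_add ENNReal.toReal_nonneg zero_le_one,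
    ENNReal.ofReal_toReal hD, ENNReal.ofReal_one, lintegral_prod _ (by fun_prop),
    ← lintegral_const_mul' _ _ (by finiteness)]
  refine lintegral_mono fun z => ?_
  calc ∫⁻ y in D, ENNReal.ofReal (L * (1 + |u z y|)) ^ 2
      ≤ ENNReal.ofReal (2 * L ^ 2) * (volume D + L2N D (u z) ^ 2) :=
        (lintegral_ofReal_linearGrowth_sq_le (volume.restrict D) hL (u z)).trans_eq
          (by rw [Measure.restrict_apply_univ, L2N])
    _ ≤ ENNReal.ofReal (2 * L ^ 2) * (volume D + 1) * (1 + L2N D (u z) ^ 2) := by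
        rw [mul_assoc]
        gcongr
        calc volume D + L2N D (u z) ^ 2
            ≤ (volume D + 1) + (volume D + 1) * L2N D (u z) ^ 2 :=
              add_le_add le_self_add (le_mul_of_one_le_left' le_add_self)
          _ = (volume D + 1) * (1 + L2N D (u z) ^ 2) := by ring

/-- the bound for `K'_f(·,s,v)`. -/
theorem stmt_8 (d : ℕ) (D : Set (Euc d)) (hD : Bornology.IsBounded D)
    (hDm : MeasurableSet D) (T c₁ c₂ L : ℝ)
    (hc₁ : 0 < c₁) (hc₂ : 0 < c₂) (hL : 0 < L) :
    ∃ C : ℝ, 0 < C ∧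
      ∀ G : Euc d → ℝ → Euc d → ℝ → ℝ, GaussianProperty D T c₁ c₂ G →
      ∀ f : ℝ → ℝ, (∀ z : ℝ, |f z| ≤ L * (1 + |z|)) →
      ∀ u : ℝ → Euc d → ℝ, Measurable (Function.uncurry u) →
        (∀ z : ℝ, MemLp (u z) 2 (volume.restrict D)) →
      ∀ v s : ℝ, 0 ≤ v → v < s → s ≤ T →
        L2N D (fun x => ∫ z in Ioc v s, ∫ y in D, G x s y z * f (u z y)) ≤
          ENNReal.ofReal (C * (s - v) ^ (1 / 2 : ℝ)) *
            (∫⁻ z in Ioc v s, (1 + L2N D (u z) ^ 2)) ^ (1 / 2 : ℝ) := by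
  set K := c₁ * (π / c₂) ^ ((d : ℝ) / 2)
  set A := 2 * L ^ 2 * ((volume D).toReal + 1)
  refine ⟨K * √A, by positivity, ?_⟩
  intro G hG f hf u hu _ v s hv hvs hsT
  have hschur := eLpNorm_two_sq_le_of_kernel (μ := volume.restrict D) measurable_gaussMajorant
    (by fun_prop) ((ae_restrict_iff' hDm).2 (.of_forall fun x hx =>
      enorm_integral_le_lintegral_gaussMajorant hDm hG hf hu hv hsT hx))
    (.of_forall (lintegral_gaussMajorant_le D hc₁.le hc₂))
    (ae_setLIntegral_gaussMajorant_le D hc₁.le hc₂)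
  have hW := lintegral_prod_linearGrowth_sq_le hD.measure_lt_top.ne (Ioo v s) hL.le hu
  rw [setLIntegral_congr Ioo_ae_eq_Ioc] at hW
  have hC : (K * √A * (s - v) ^ (1 / 2 : ℝ)) ^ 2 = K * (s - v) * K * A := by
    rw [mul_pow, mul_pow, Real.sq_sqrt (by positivity), ← Real.sqrt_eq_rpow,
      Real.sq_sqrt (sub_nonneg.2 hvs.le)]
    ring
  refine ENNReal.le_mul_rpow_half_of_sq_le (hschur.trans ?_)
  calc _ ≤ ENNReal.ofReal K * ENNReal.ofReal (s - v) * ENNReal.ofReal K *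
        (ENNReal.ofReal A * ∫⁻ z in Ioc v s, (1 + L2N D (u z) ^ 2)) := by
        gcongr
    _ = _ := by
      rw [← ENNReal.ofReal_pow (by positivity), hC, ← mul_assoc,
        ← ENNReal.ofReal_mul (by positivity), ← ENNReal.ofReal_mul (by positivity),
        ← ENNReal.ofReal_mul (by positivity)]
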